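/- Let A be a nonnegative symmetric n×n real matrix, let J ⊆ supp(A) be a symmetric label set with A_{ij} > 0 for all (i,j) ∈ J, let p ≥ 1 define Ā by Ā_{ij} = p·A_{ij} if (i,j) ∈ J and Ā_{ij} = A_{ij} otherwise, and suppose n − rank(L(A)) ≤ d < n. Then there exists β̄ > 0 such that for every β with 0 < β < β̄, each global minimizer (Z*, H*) of problem (CP) satisfies rank(L(A ∘ Z*)) = n − d and Z* ∈ {0,1}^{n×n}. -/

import Mathlib

open Matrix BigOperators

/-- The graph Laplacian of a matrix: `L(M) = Diag(M e) - M`. -/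
noncomputable def Lap {n : ℕ} (M : Matrix (Fin n) (Fin n) ℝ) : Matrix (Fin n) (Fin n) ℝ :=
  Matrix.diagonal (fun i => ∑ j, M i j) - M

/-- The objective `f(Z, H) = tr(Hᵀ L(A ∘ Z) H) - β tr(Ā Z)`. -/
noncomputable def fobj {n d : ℕ} (A Abar : Matrix (Fin n) (Fin n) ℝ) (β : ℝ)
    (Z : Matrix (Fin n) (Fin n) ℝ) (H : Matrix (Fin n) (Fin d) ℝ) : ℝ :=
  Matrix.trace (Hᵀ * Lap (Matrix.hadamard A Z) * H) - β * Matrix.trace (Abar * Z)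

/-- Feasibility for problem (CP): `Z ∈ Sⁿ_A ∩ [0,1]^{n×n}` and `Hᵀ H = I_d`. -/
def feasCP {n d : ℕ} (A : Matrix (Fin n) (Fin n) ℝ)
    (Z : Matrix (Fin n) (Fin n) ℝ) (H : Matrix (Fin n) (Fin d) ℝ) : Prop :=
  Zᵀ = Z ∧ (∀ i j, Z i j ≠ 0 → A i j ≠ 0) ∧ (∀ i j, 0 ≤ Z i j ∧ Z i j ≤ 1) ∧ Hᵀ * H = 1

/-- Feasibility for problem (MIP): `Z ∈ Sⁿ_A ∩ {0,1}^{n×n}` and `Hᵀ H = I_d`. -/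
def feasMIP {n d : ℕ} (A : Matrix (Fin n) (Fin n) ℝ)
    (Z : Matrix (Fin n) (Fin n) ℝ) (H : Matrix (Fin n) (Fin d) ℝ) : Prop :=
  Zᵀ = Z ∧ (∀ i j, Z i j ≠ 0 → A i j ≠ 0) ∧ (∀ i j, Z i j = 0 ∨ Z i j = 1) ∧ Hᵀ * H = 1

section Aux

variable {n d : ℕ}

lemma lap_mulVec (W : Matrix (Fin n) (Fin n) ℝ) (x : Fin n → ℝ) (i : Fin n) :
    (Lap W *ᵥ x) i = ∑ j, W i j * (x i - x j) := by
  simp [Lap, sub_mulVec, mulVec, dotProduct, diagonal, mul_sub, Finset.sum_mul,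
    Finset.sum_sub_distrib, mul_comm, Finset.mul_sum]

lemma lap_zero : Lap (0 : Matrix (Fin n) (Fin n) ℝ) = 0 := by
  simp [Lap]

lemma lap_vec_quad (W : Matrix (Fin n) (Fin n) ℝ) (hW : Wᵀ = W) (x : Fin n → ℝ) :
    x ⬝ᵥ (Lap W *ᵥ x) = (1/2) * ∑ i, ∑ j, W i j * (x i - x j)^2 := by
  have key : ∑ i, ∑ j, W i j * (x i - x j)^2
      = (∑ i, ∑ j, x i * W i j * (x i - x j)) + ∑ i, ∑ j, W i j * x j * (x j - x i) := by
    rw [← Finset.sum_add_distrib]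
    refine Finset.sum_congr rfl fun i _ => ?_
    rw [← Finset.sum_add_distrib]
    refine Finset.sum_congr rfl fun j _ => ?_
    ring
  have swap : ∑ i, ∑ j, W i j * x j * (x j - x i)
      = ∑ i, ∑ j, x i * W i j * (x i - x j) := by
    rw [Finset.sum_comm]
    refine Finset.sum_congr rfl fun i _ => Finset.sum_congr rfl fun j _ => ?_
    have : W j i = W i j := congrFun (congrFun hW i) j
    rw [this]; ring
  have lhs : x ⬝ᵥ (Lap W *ᵥ x) = ∑ i, ∑ j, x i * W i j * (x i - x j) := by
    simp only [dotProduct]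
    refine Finset.sum_congr rfl fun i _ => ?_
    rw [lap_mulVec, Finset.mul_sum]
    exact Finset.sum_congr rfl fun j _ => by ring
  rw [lhs, key, swap]; ring

lemma trace_conj_eq_sum_cols (M : Matrix (Fin n) (Fin n) ℝ) (H : Matrix (Fin n) (Fin d) ℝ) :
    Matrix.trace (Hᵀ * M * H) = ∑ k, (fun i => H i k) ⬝ᵥ (M *ᵥ (fun i => H i k)) := by
  simp only [Matrix.trace, Matrix.diag, Matrix.mul_apply, dotProduct, mulVec,
    Matrix.transpose_apply, dotProduct, Finset.sum_mul, Finset.mul_sum]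
  refine Finset.sum_congr rfl fun k _ => ?_
  rw [Finset.sum_comm]
  refine Finset.sum_congr rfl fun i _ => Finset.sum_congr rfl fun j _ => by ring

lemma lap_trace_quad (W : Matrix (Fin n) (Fin n) ℝ) (hW : Wᵀ = W) (H : Matrix (Fin n) (Fin d) ℝ) :
    Matrix.trace (Hᵀ * Lap W * H)
      = (1/2) * ∑ i, ∑ j, W i j * (∑ k, (H i k - H j k)^2) := by
  rw [trace_conj_eq_sum_cols]
  have : ∀ k : Fin d, (fun i => H i k) ⬝ᵥ (Lap W *ᵥ (fun i => H i k))
      = (1/2) * ∑ i, ∑ j, W i j * (H i k - H j k)^2 := fun k => lap_vec_quad W hW _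
  rw [Finset.sum_congr rfl fun k _ => this k]
  rw [← Finset.mul_sum]
  congr 1
  rw [Finset.sum_comm]
  refine Finset.sum_congr rfl fun i _ => ?_
  rw [Finset.sum_comm]
  refine Finset.sum_congr rfl fun j _ => ?_
  rw [Finset.mul_sum]

lemma lap_trace_nonneg (W : Matrix (Fin n) (Fin n) ℝ) (hW : Wᵀ = W)
    (hpos : ∀ i j, 0 ≤ W i j) (H : Matrix (Fin n) (Fin d) ℝ) :
    0 ≤ Matrix.trace (Hᵀ * Lap W * H) := by
  rw [lap_trace_quad W hW H]
  have : (0:ℝ) ≤ ∑ i, ∑ j, W i j * (∑ k, (H i k - H j k)^2) := by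
    refine Finset.sum_nonneg fun i _ => Finset.sum_nonneg fun j _ => ?_
    exact mul_nonneg (hpos i j) (Finset.sum_nonneg fun k _ => sq_nonneg _)
  linarith

lemma rows_eq_of_trace_zero (W : Matrix (Fin n) (Fin n) ℝ) (hW : Wᵀ = W)
    (hpos : ∀ i j, 0 ≤ W i j) (H : Matrix (Fin n) (Fin d) ℝ)
    (h : Matrix.trace (Hᵀ * Lap W * H) = 0) :
    ∀ i j, W i j ≠ 0 → ∀ k, H i k = H j k := by
  rw [lap_trace_quad W hW H] at h
  have h' : ∑ i, ∑ j, W i j * (∑ k, (H i k - H j k)^2) = 0 := by linarith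
  intro i j hij k
  have hterm : ∀ a ∈ (Finset.univ : Finset (Fin n)), (0:ℝ) ≤ ∑ b, W a b * (∑ k, (H a k - H b k)^2) := by
    intro a _
    exact Finset.sum_nonneg fun b _ => mul_nonneg (hpos a b) (Finset.sum_nonneg fun k _ => sq_nonneg _)
  have hrow := (Finset.sum_eq_zero_iff_of_nonneg hterm).mp h' i (Finset.mem_univ i)
  have hterm2 : ∀ b ∈ (Finset.univ : Finset (Fin n)), (0:ℝ) ≤ W i b * (∑ k, (H i k - H b k)^2) :=
    fun b _ => mul_nonneg (hpos i b) (Finset.sum_nonneg fun k _ => sq_nonneg _)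
  have hij0 := (Finset.sum_eq_zero_iff_of_nonneg hterm2).mp hrow j (Finset.mem_univ j)
  have hsum0 : ∑ k, (H i k - H j k)^2 = 0 := by
    rcases mul_eq_zero.mp hij0 with h | h
    · exact absurd h hij
    · exact h
  have := (Finset.sum_eq_zero_iff_of_nonneg (fun k _ => sq_nonneg (H i k - H j k))).mp hsum0 k (Finset.mem_univ k)
  have := sq_eq_zero_iff.mp this
  linarith

lemma mem_ker_of_const (W : Matrix (Fin n) (Fin n) ℝ) (x : Fin n → ℝ)
    (h : ∀ i j, W i j ≠ 0 → x i = x j) : Lap W *ᵥ x = 0 := by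
  funext i
  rw [lap_mulVec]
  refine Finset.sum_eq_zero fun j _ => ?_
  by_cases hw : W i j = 0
  · rw [hw]; ring
  · rw [h i j hw]; ring

lemma const_of_mem_ker (W : Matrix (Fin n) (Fin n) ℝ) (hW : Wᵀ = W)
    (hpos : ∀ i j, 0 ≤ W i j) (x : Fin n → ℝ) (h : Lap W *ᵥ x = 0) :
    ∀ i j, W i j ≠ 0 → x i = x j := by
  have h0 : x ⬝ᵥ (Lap W *ᵥ x) = 0 := by rw [h]; simp
  rw [lap_vec_quad W hW x] at h0
  have h' : ∑ i, ∑ j, W i j * (x i - x j)^2 = 0 := by linarith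
  intro i j hij
  have hterm : ∀ a ∈ (Finset.univ : Finset (Fin n)), (0:ℝ) ≤ ∑ b, W a b * (x a - x b)^2 :=
    fun a _ => Finset.sum_nonneg fun b _ => mul_nonneg (hpos a b) (sq_nonneg _)
  have hrow := (Finset.sum_eq_zero_iff_of_nonneg hterm).mp h' i (Finset.mem_univ i)
  have hterm2 : ∀ b ∈ (Finset.univ : Finset (Fin n)), (0:ℝ) ≤ W i b * (x i - x b)^2 :=
    fun b _ => mul_nonneg (hpos i b) (sq_nonneg _)
  have hij0 := (Finset.sum_eq_zero_iff_of_nonneg hterm2).mp hrow j (Finset.mem_univ j)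
  rcases mul_eq_zero.mp hij0 with hc | hc
  · exact absurd hc hij
  · have := sq_eq_zero_iff.mp hc; linarith

lemma exists_stiefel_in (K : Submodule ℝ (Fin n → ℝ)) (hK : d ≤ Module.finrank ℝ K) :
    ∃ H : Matrix (Fin n) (Fin d) ℝ, Hᵀ * H = 1 ∧ ∀ k : Fin d, (fun i => H i k) ∈ K := by
  classical
  let e : EuclideanSpace ℝ (Fin n) ≃ₗ[ℝ] (Fin n → ℝ) := WithLp.linearEquiv 2 ℝ (Fin n → ℝ)
  let K' : Submodule ℝ (EuclideanSpace ℝ (Fin n)) := K.map e.symm.toLinearMap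
  have hrank : Module.finrank ℝ K' = Module.finrank ℝ K := by
    exact LinearEquiv.finrank_map_eq e.symm K
  have hK' : d ≤ Module.finrank ℝ K' := hrank ▸ hK
  let b := stdOrthonormalBasis ℝ K'
  let H : Matrix (Fin n) (Fin d) ℝ := fun i k => ((b (Fin.castLE hK' k) : EuclideanSpace ℝ (Fin n))) i
  refine ⟨H, ?_, ?_⟩
  · ext k l
    have hinner : (inner (𝕜 := ℝ) ((b (Fin.castLE hK' k) : EuclideanSpace ℝ (Fin n)))
        ((b (Fin.castLE hK' l) : EuclideanSpace ℝ (Fin n))))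
        = if Fin.castLE hK' k = Fin.castLE hK' l then (1:ℝ) else 0 := by
      rw [← Submodule.coe_inner]
      exact orthonormal_iff_ite.mp b.orthonormal _ _
    have hpi : (inner (𝕜 := ℝ) ((b (Fin.castLE hK' k) : EuclideanSpace ℝ (Fin n)))
        ((b (Fin.castLE hK' l) : EuclideanSpace ℝ (Fin n))))
        = ∑ i, H i k * H i l := by
      rw [PiLp.inner_apply]
      simp [H, RCLike.inner_apply, conj_trivial]
      exact Finset.sum_congr rfl fun i _ => mul_comm _ _
    have hcast : (Fin.castLE hK' k = Fin.castLE hK' l) ↔ k = l := by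
      constructor
      · intro h
        have := congrArg Fin.val h
        exact Fin.ext (by simpa using this)
      · intro h; rw [h]
    rw [Matrix.mul_apply, Matrix.one_apply]
    simp only [Matrix.transpose_apply]
    rw [show ∑ i, H i k * H i l = if k = l then (1:ℝ) else 0 by
      rw [← hpi, hinner, if_congr hcast rfl rfl]]
  · intro k
    have hmem : (b (Fin.castLE hK' k) : EuclideanSpace ℝ (Fin n)) ∈ K' := (b (Fin.castLE hK' k)).2
    obtain ⟨y, hy, hxy⟩ := hmem
    have : e ((b (Fin.castLE hK' k) : EuclideanSpace ℝ (Fin n))) = y := by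
      rw [← hxy]; exact e.apply_symm_apply y
    have hcol : (fun i => H i k) = e ((b (Fin.castLE hK' k) : EuclideanSpace ℝ (Fin n))) := rfl
    rw [hcol, this]; exact hy

lemma rank_eq_sub_nullity (M : Matrix (Fin n) (Fin n) ℝ) :
    (M.rank : ℤ) = (n : ℤ) - (Module.finrank ℝ (LinearMap.ker M.mulVecLin) : ℤ) := by
  have h := LinearMap.finrank_range_add_finrank_ker M.mulVecLin
  have hdom : Module.finrank ℝ (Fin n → ℝ) = n := by simp
  rw [hdom] at h
  rw [Matrix.rank]
  omega

lemma stiefel_isCompact : IsCompact {H : Matrix (Fin n) (Fin d) ℝ | Hᵀ * H = 1} := by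
  have hsub : {H : Matrix (Fin n) (Fin d) ℝ | Hᵀ * H = 1}
      ⊆ (Set.pi Set.univ fun _ : Fin n => Set.pi Set.univ fun _ : Fin d => Set.Icc (-1:ℝ) 1) := by
    intro H hH
    intro i _ k _
    have hcol : ∑ a, H a k * H a k = 1 := by
      have := congrFun (congrFun hH k) k
      simpa [Matrix.mul_apply, Matrix.one_apply] using this
    have h1 : (H i k)^2 ≤ 1 := by
      have hle : (H i k)^2 ≤ ∑ a, H a k * H a k := by
        rw [show (H i k)^2 = H i k * H i k from sq (H i k) ▸ rfl]
        exact Finset.single_le_sum (f := fun a => H a k * H a k)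
          (fun a _ => mul_self_nonneg _) (Finset.mem_univ i)
      linarith [hcol ▸ hle]
    constructor
    · nlinarith [sq_nonneg (H i k + 1)]
    · nlinarith [sq_nonneg (H i k - 1)]
  have hcomp : IsCompact (Set.pi Set.univ fun _ : Fin n =>
      Set.pi Set.univ fun _ : Fin d => Set.Icc (-1:ℝ) 1) :=
    isCompact_univ_pi fun _ => isCompact_univ_pi fun _ => isCompact_Icc
  have hclosed : IsClosed {H : Matrix (Fin n) (Fin d) ℝ | Hᵀ * H = 1} := by
    have : Continuous fun H : Matrix (Fin n) (Fin d) ℝ => Hᵀ * H :=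
      (continuous_id.matrix_transpose).matrix_mul continuous_id
    exact isClosed_eq this continuous_const
  exact hcomp.of_isClosed_subset hclosed hsub

lemma continuous_traceform (M : Matrix (Fin n) (Fin n) ℝ) :
    Continuous fun H : Matrix (Fin n) (Fin d) ℝ => Matrix.trace (Hᵀ * M * H) :=
  (((continuous_id.matrix_transpose).matrix_mul continuous_const).matrix_mul
    continuous_id).matrix_trace

lemma binary_finite : Set.Finite {Z : Matrix (Fin n) (Fin n) ℝ | ∀ i j, Z i j = 0 ∨ Z i j = 1} := by
  have h01 : Set.Finite ({0,1} : Set ℝ) := (Set.finite_singleton (1:ℝ)).insert 0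
  have h1 : Set.Finite {g : Fin n → ℝ | ∀ j, g j ∈ ({0,1} : Set ℝ)} :=
    Set.Finite.pi' fun _ => h01
  have h2 : Set.Finite {Z : Fin n → Fin n → ℝ | ∀ i, Z i ∈ {g : Fin n → ℝ | ∀ j, g j ∈ ({0,1} : Set ℝ)}} :=
    Set.Finite.pi' fun _ => h1
  refine h2.subset ?_
  intro Z hZ i
  intro j
  rcases hZ i j with h | h <;> simp [h]

lemma cols_linearIndependent (H : Matrix (Fin n) (Fin d) ℝ) (hH : Hᵀ * H = 1) :
    LinearIndependent ℝ (fun k : Fin d => (fun i => H i k : Fin n → ℝ)) := by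
  rw [linearIndependent_iff']
  intro s g hsum l hl
  have happ : ∀ i, ∑ k ∈ s, g k * H i k = 0 := by
    intro i
    have := congrFun hsum i
    simpa [Finset.sum_apply] using this
  have key : ∑ i, (∑ k ∈ s, g k * H i k) * H i l = 0 := by
    simp [happ]
  have expand : ∑ i, (∑ k ∈ s, g k * H i k) * H i l
      = ∑ k ∈ s, g k * (∑ i, H i k * H i l) := by
    have e1 : ∀ i, (∑ k ∈ s, g k * H i k) * H i l = ∑ k ∈ s, g k * H i k * H i l :=
      fun i => Finset.sum_mul s _ (H i l)
    rw [Finset.sum_congr rfl fun i _ => e1 i, Finset.sum_comm]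
    refine Finset.sum_congr rfl fun k _ => ?_
    rw [Finset.mul_sum]
    refine Finset.sum_congr rfl fun i _ => by ring
  have horth : ∀ k l : Fin d, ∑ i, H i k * H i l = if k = l then (1:ℝ) else 0 := by
    intro k l
    have := congrFun (congrFun hH k) l
    simpa [Matrix.mul_apply, Matrix.one_apply] using this
  rw [expand] at key
  have h2' : ∑ k ∈ s, (if k = l then g k else 0) = ∑ k ∈ s, g k * ∑ i, H i k * H i l := by
    refine Finset.sum_congr rfl fun k _ => ?_
    rw [horth k l]
    split <;> simp
  have h2 : ∑ k ∈ s, (if k = l then g k else 0) = 0 := h2'.trans key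
  rwa [Finset.sum_ite_eq' s l g, if_pos hl] at h2

lemma card_le_finrank_of_cols_in (H : Matrix (Fin n) (Fin d) ℝ) (hH : Hᵀ * H = 1)
    (K : Submodule ℝ (Fin n → ℝ)) (hcols : ∀ k, (fun i => H i k) ∈ K) :
    d ≤ Module.finrank ℝ K := by
  have hind := cols_linearIndependent H hH
  let v : Fin d → K := fun k => ⟨fun i => H i k, hcols k⟩
  have hv : LinearIndependent ℝ v := by
    have : (fun k : Fin d => (fun i => H i k : Fin n → ℝ)) = K.subtype ∘ v := rfl
    rw [this] at hind
    exact LinearIndependent.of_comp K.subtype hind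
  simpa using hv.fintype_card_le_finrank

lemma stiefel_nonempty (hdn : d ≤ n) :
    ∃ H : Matrix (Fin n) (Fin d) ℝ, Hᵀ * H = 1 := by
  obtain ⟨H, hH, -⟩ := exists_stiefel_in (⊤ : Submodule ℝ (Fin n → ℝ)) (by simpa using hdn)
  exact ⟨H, hH⟩

lemma exists_min_on_stiefel (hdn : d ≤ n) (M : Matrix (Fin n) (Fin n) ℝ) :
    ∃ H₀ : Matrix (Fin n) (Fin d) ℝ, H₀ᵀ * H₀ = 1 ∧
      ∀ H : Matrix (Fin n) (Fin d) ℝ, Hᵀ * H = 1 →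
        Matrix.trace (H₀ᵀ * M * H₀) ≤ Matrix.trace (Hᵀ * M * H) := by
  obtain ⟨He, hHe⟩ := stiefel_nonempty (n := n) (d := d) hdn
  have hne : Set.Nonempty {H : Matrix (Fin n) (Fin d) ℝ | Hᵀ * H = 1} := ⟨He, hHe⟩
  obtain ⟨H₀, hH₀, hmin⟩ := stiefel_isCompact.exists_isMinOn hne
    ((continuous_traceform M).continuousOn)
  exact ⟨H₀, hH₀, fun H hH => hmin hH⟩

lemma cols_in_ker_of_trace_zero (W : Matrix (Fin n) (Fin n) ℝ) (hW : Wᵀ = W)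
    (hpos : ∀ i j, 0 ≤ W i j) (H : Matrix (Fin n) (Fin d) ℝ)
    (h : Matrix.trace (Hᵀ * Lap W * H) = 0) :
    ∀ k, (fun i => H i k) ∈ LinearMap.ker (Lap W).mulVecLin := by
  intro k
  rw [LinearMap.mem_ker, Matrix.mulVecLin_apply]
  exact mem_ker_of_const W _ fun i j hij => rows_eq_of_trace_zero W hW hpos H h i j hij k

lemma trace_zero_of_cols_ker (M : Matrix (Fin n) (Fin n) ℝ) (H : Matrix (Fin n) (Fin d) ℝ)
    (h : ∀ k, (fun i => H i k) ∈ LinearMap.ker M.mulVecLin) :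
    Matrix.trace (Hᵀ * M * H) = 0 := by
  rw [trace_conj_eq_sum_cols]
  refine Finset.sum_eq_zero fun k _ => ?_
  have := h k
  rw [LinearMap.mem_ker, Matrix.mulVecLin_apply] at this
  rw [this]
  simp

lemma exists_gap (A : Matrix (Fin n) (Fin n) ℝ) (hAsym : Aᵀ = A) (hAnn : ∀ i j, 0 ≤ A i j)
    (hdn : d ≤ n) :
    ∃ δ : ℝ, 0 < δ ∧ ∀ Z : Matrix (Fin n) (Fin n) ℝ, Zᵀ = Z → (∀ i j, Z i j = 0 ∨ Z i j = 1) →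
      Module.finrank ℝ (LinearMap.ker (Lap (Matrix.hadamard A Z)).mulVecLin) < d →
      ∀ H : Matrix (Fin n) (Fin d) ℝ, Hᵀ * H = 1 →
        δ ≤ Matrix.trace (Hᵀ * Lap (Matrix.hadamard A Z) * H) := by
  classical
  set T : Set (Matrix (Fin n) (Fin n) ℝ) :=
    {Z | Zᵀ = Z ∧ (∀ i j, Z i j = 0 ∨ Z i j = 1) ∧
      Module.finrank ℝ (LinearMap.ker (Lap (Matrix.hadamard A Z)).mulVecLin) < d} with hT
  have hTfin : T.Finite := binary_finite.subset fun Z hZ => hZ.2.1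
  have hWsym : ∀ Z : Matrix (Fin n) (Fin n) ℝ, Zᵀ = Z → (Matrix.hadamard A Z)ᵀ = Matrix.hadamard A Z := by
    intro Z hZ
    ext i j
    simp only [Matrix.transpose_apply, Matrix.hadamard_apply]
    rw [show A j i = A i j from congrFun (congrFun hAsym i) j,
      show Z j i = Z i j from congrFun (congrFun hZ i) j]
  have hWpos : ∀ Z : Matrix (Fin n) (Fin n) ℝ, (∀ i j, Z i j = 0 ∨ Z i j = 1) →
      ∀ i j, 0 ≤ Matrix.hadamard A Z i j := by
    intro Z hb i j
    rcases hb i j with h | h <;> simp [Matrix.hadamard_apply, h, hAnn i j]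
  let f : Matrix (Fin n) (Fin n) ℝ → Matrix (Fin n) (Fin d) ℝ :=
    fun Z => Classical.choose (exists_min_on_stiefel hdn (Lap (Matrix.hadamard A Z)))
  have hf : ∀ Z, (f Z)ᵀ * (f Z) = 1 ∧ ∀ H : Matrix (Fin n) (Fin d) ℝ, Hᵀ * H = 1 →
      Matrix.trace ((f Z)ᵀ * Lap (Matrix.hadamard A Z) * (f Z))
        ≤ Matrix.trace (Hᵀ * Lap (Matrix.hadamard A Z) * H) :=
    fun Z => Classical.choose_spec (exists_min_on_stiefel hdn (Lap (Matrix.hadamard A Z)))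
  let m : Matrix (Fin n) (Fin n) ℝ → ℝ :=
    fun Z => Matrix.trace ((f Z)ᵀ * Lap (Matrix.hadamard A Z) * (f Z))
  have hmpos : ∀ Z ∈ T, 0 < m Z := by
    intro Z hZ
    obtain ⟨hZsym, hZb, hZk⟩ := hZ
    have h0 : 0 ≤ m Z := lap_trace_nonneg _ (hWsym Z hZsym) (hWpos Z hZb) _
    rcases lt_or_eq_of_le h0 with h | h
    · exact h
    · exfalso
      have hker := cols_in_ker_of_trace_zero _ (hWsym Z hZsym) (hWpos Z hZb) (f Z) h.symm
      have := card_le_finrank_of_cols_in (f Z) (hf Z).1 _ hker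
      omega
  rcases Set.eq_empty_or_nonempty T with hTe | hTne
  · refine ⟨1, one_pos, fun Z hZsym hZb hZk H hH => ?_⟩
    have : Z ∈ T := ⟨hZsym, hZb, hZk⟩
    rw [hTe] at this
    exact absurd this (Set.notMem_empty Z)
  · obtain ⟨Z₀, hZ₀, hZ₀min⟩ := Set.exists_min_image T m hTfin hTne
    refine ⟨m Z₀, hmpos Z₀ hZ₀, fun Z hZsym hZb hZk H hH => ?_⟩
    have hZT : Z ∈ T := ⟨hZsym, hZb, hZk⟩
    exact le_trans (hZ₀min Z hZT) ((hf Z).2 H hH)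

lemma exists_max_tr (A Abar : Matrix (Fin n) (Fin n) ℝ) (hdn : d ≤ n) :
    ∃ Zm : Matrix (Fin n) (Fin n) ℝ,
      (Zmᵀ = Zm ∧ (∀ i j, Zm i j ≠ 0 → A i j ≠ 0) ∧ (∀ i j, Zm i j = 0 ∨ Zm i j = 1) ∧
        d ≤ Module.finrank ℝ (LinearMap.ker (Lap (Matrix.hadamard A Zm)).mulVecLin)) ∧
      ∀ Z : Matrix (Fin n) (Fin n) ℝ, Zᵀ = Z → (∀ i j, Z i j ≠ 0 → A i j ≠ 0) →
        (∀ i j, Z i j = 0 ∨ Z i j = 1) →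
        d ≤ Module.finrank ℝ (LinearMap.ker (Lap (Matrix.hadamard A Z)).mulVecLin) →
        Matrix.trace (Abar * Z) ≤ Matrix.trace (Abar * Zm) := by
  classical
  set T : Set (Matrix (Fin n) (Fin n) ℝ) :=
    {Z | Zᵀ = Z ∧ (∀ i j, Z i j ≠ 0 → A i j ≠ 0) ∧ (∀ i j, Z i j = 0 ∨ Z i j = 1) ∧
      d ≤ Module.finrank ℝ (LinearMap.ker (Lap (Matrix.hadamard A Z)).mulVecLin)} with hT
  have hTfin : T.Finite := binary_finite.subset fun Z hZ => hZ.2.2.1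
  have h0 : (0 : Matrix (Fin n) (Fin n) ℝ) ∈ T := by
    refine ⟨Matrix.transpose_zero, fun i j h => absurd rfl h, fun i j => Or.inl rfl, ?_⟩
    rw [Matrix.hadamard_zero, lap_zero, Matrix.mulVecLin_zero, LinearMap.ker_zero]
    simpa using hdn
  obtain ⟨Zm, hZm, hmax⟩ := Set.exists_max_image T (fun Z => Matrix.trace (Abar * Z)) hTfin ⟨0, h0⟩
  exact ⟨Zm, hZm, fun Z h1 h2 h3 h4 => hmax Z ⟨h1, h2, h3, h4⟩⟩

lemma trace_mul_eq (Abar Z : Matrix (Fin n) (Fin n) ℝ) (hZ : Zᵀ = Z) :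
    Matrix.trace (Abar * Z) = ∑ i, ∑ j, Abar i j * Z i j := by
  simp only [Matrix.trace, Matrix.diag, Matrix.mul_apply]
  refine Finset.sum_congr rfl fun i _ => Finset.sum_congr rfl fun j _ => ?_
  rw [show Z j i = Z i j from congrFun (congrFun hZ i) j]

lemma fobj_eq (A Abar : Matrix (Fin n) (Fin n) ℝ) (β : ℝ) (Z : Matrix (Fin n) (Fin n) ℝ)
    (H : Matrix (Fin n) (Fin d) ℝ) (hA : Aᵀ = A) (hZ : Zᵀ = Z) :
    fobj A Abar β Z H
      = ∑ i, ∑ j, Z i j * ((1/2) * A i j * (∑ k, (H i k - H j k)^2) - β * Abar i j) := by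
  have hW : (Matrix.hadamard A Z)ᵀ = Matrix.hadamard A Z := by
    ext i j
    simp only [Matrix.transpose_apply, Matrix.hadamard_apply]
    rw [show A j i = A i j from congrFun (congrFun hA i) j,
      show Z j i = Z i j from congrFun (congrFun hZ i) j]
  rw [fobj, lap_trace_quad _ hW H, trace_mul_eq Abar Z hZ]
  rw [Finset.mul_sum, Finset.mul_sum, ← Finset.sum_sub_distrib]
  refine Finset.sum_congr rfl fun i _ => ?_
  rw [Finset.mul_sum, Finset.mul_sum, ← Finset.sum_sub_distrib]
  refine Finset.sum_congr rfl fun j _ => ?_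
  simp only [Matrix.hadamard_apply]
  ring

end Aux

set_option maxHeartbeats 2000000 in
theorem stmt11 {n d : ℕ} (A Abar : Matrix (Fin n) (Fin n) ℝ)
    (hAsym : Aᵀ = A) (hAnn : ∀ i j, 0 ≤ A i j)
    (J : Set (Fin n × Fin n))
    (hJsym : ∀ i j, (i, j) ∈ J ↔ (j, i) ∈ J)
    (hJpos : ∀ i j, (i, j) ∈ J → 0 < A i j)
    (p : ℝ) (hp : 1 ≤ p)
    (hAbar : ∀ i j, ((i, j) ∈ J → Abar i j = p * A i j) ∧ ((i, j) ∉ J → Abar i j = A i j))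
    (hd₁ : (n : ℤ) - (Lap A).rank ≤ (d : ℤ)) (hd₂ : d < n) :
    ∃ βbar : ℝ, 0 < βbar ∧
      ∀ β : ℝ, 0 < β → β < βbar →
        ∀ (Zs : Matrix (Fin n) (Fin n) ℝ) (Hs : Matrix (Fin n) (Fin d) ℝ),
          feasCP A Zs Hs →
          (∀ (Z : Matrix (Fin n) (Fin n) ℝ) (H : Matrix (Fin n) (Fin d) ℝ),
            feasCP A Z H → fobj A Abar β Zs Hs ≤ fobj A Abar β Z H) →
          (((Lap (Matrix.hadamard A Zs)).rank : ℤ) = (n : ℤ) - (d : ℤ) ∧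
            ∀ i j, Zs i j = 0 ∨ Zs i j = 1) := by
  classical
  have hdn : d ≤ n := le_of_lt hd₂
  have hAs : ∀ i j, A j i = A i j := fun i j => congrFun (congrFun hAsym i) j
  have hAbsym : ∀ i j, Abar j i = Abar i j := by
    intro i j
    by_cases hJ : (i, j) ∈ J
    · have hJ' : (j, i) ∈ J := (hJsym i j).mp hJ
      rw [(hAbar j i).1 hJ', (hAbar i j).1 hJ, hAs i j]
    · have hJ' : (j, i) ∉ J := fun h => hJ ((hJsym j i).mp h)
      rw [(hAbar j i).2 hJ', (hAbar i j).2 hJ, hAs i j]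
  have hAbge : ∀ i j, A i j ≤ Abar i j := by
    intro i j
    by_cases hJ : (i, j) ∈ J
    · rw [(hAbar i j).1 hJ]
      nlinarith [hJpos i j hJ]
    · rw [(hAbar i j).2 hJ]
  have hAbnn : ∀ i j, 0 ≤ Abar i j := fun i j => le_trans (hAnn i j) (hAbge i j)
  obtain ⟨δ, hδpos, hgap⟩ := exists_gap (d := d) A hAsym hAnn hdn
  obtain ⟨Zm, ⟨hZmsym, hZmsupp, hZmb, hZmk⟩, hZmmax⟩ := exists_max_tr (d := d) A Abar hdn
  set S : ℝ := ∑ i, ∑ j, Abar i j with hS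
  have hSnn : 0 ≤ S :=
    Finset.sum_nonneg fun i _ => Finset.sum_nonneg fun j _ => hAbnn i j
  refine ⟨δ / (S + 1), by positivity, ?_⟩
  intro β hβ hββ Zs Hs hfeas hmin
  obtain ⟨hZsym, hZsupp, hZ01, hHs⟩ := hfeas
  have hZs : ∀ i j, Zs j i = Zs i j := fun i j => congrFun (congrFun hZsym i) j
  have hβS : β * S < δ := by
    have h1 : β * (S + 1) < δ / (S + 1) * (S + 1) :=
      mul_lt_mul_of_pos_right hββ (by linarith)
    rw [div_mul_cancel₀ δ (by linarith : S + 1 ≠ 0)] at h1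
    nlinarith
  -- the linear coefficients
  set s : Fin n → Fin n → ℝ := fun i j => ∑ k, (Hs i k - Hs j k)^2 with hsdef
  have hsnn : ∀ i j, 0 ≤ s i j := fun i j => Finset.sum_nonneg fun k _ => sq_nonneg _
  have hssym : ∀ i j, s j i = s i j :=
    fun i j => Finset.sum_congr rfl fun k _ => by ring
  set c : Fin n → Fin n → ℝ := fun i j => (1/2) * A i j * s i j - β * Abar i j with hcdef
  have hcsym : ∀ i j, c j i = c i j := by
    intro i j
    simp only [hcdef]
    rw [hssym i j, hAbsym i j, hAs i j]
  -- the rounded matrix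
  set Zh : Matrix (Fin n) (Fin n) ℝ :=
    fun i j => if A i j ≠ 0 ∧ c i j ≤ 0 then 1 else 0 with hZhdef
  have hZhsym : Zhᵀ = Zh := by
    ext i j
    simp only [Matrix.transpose_apply]
    simp only [hZhdef]
    rw [hAs i j, hcsym i j]
  have hZh01 : ∀ i j, Zh i j = 0 ∨ Zh i j = 1 := by
    intro i j
    simp only [hZhdef]
    split <;> simp
  have hZhsupp : ∀ i j, Zh i j ≠ 0 → A i j ≠ 0 := by
    intro i j h
    simp only [hZhdef] at h
    by_contra hA
    rw [if_neg (fun hc => hc.1 hA)] at h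
    exact h rfl
  have hZhfeas : feasCP A Zh Hs := by
    refine ⟨hZhsym, hZhsupp, fun i j => ?_, hHs⟩
    rcases hZh01 i j with h | h <;> rw [h] <;> norm_num
  -- fobj as a linear function of Z
  have hfZs : fobj A Abar β Zs Hs = ∑ i, ∑ j, Zs i j * c i j :=
    fobj_eq A Abar β Zs Hs hAsym hZsym
  have hfZh : fobj A Abar β Zh Hs = ∑ i, ∑ j, Zh i j * c i j :=
    fobj_eq A Abar β Zh Hs hAsym hZhsym
  have htermle : ∀ i j, Zh i j * c i j ≤ Zs i j * c i j := by
    intro i j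
    by_cases hA : A i j = 0
    · have hZs0 : Zs i j = 0 := by
        by_contra h
        exact hZsupp i j h hA
      have hZh0 : Zh i j = 0 := by
        simp only [hZhdef]
        rw [if_neg (fun hc => hc.1 hA)]
      rw [hZs0, hZh0]
    · by_cases hcle : c i j ≤ 0
      · have : Zh i j = 1 := by simp only [hZhdef]; rw [if_pos ⟨hA, hcle⟩]
        rw [this, one_mul]
        nlinarith [(hZ01 i j).1, (hZ01 i j).2]
      · have : Zh i j = 0 := by
          simp only [hZhdef]
          rw [if_neg (fun hc => hcle hc.2)]
        rw [this, zero_mul]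
        nlinarith [(hZ01 i j).1]
  have hfle : fobj A Abar β Zh Hs ≤ fobj A Abar β Zs Hs := by
    rw [hfZs, hfZh]
    exact Finset.sum_le_sum fun i _ => Finset.sum_le_sum fun j _ => htermle i j
  have hfeq : fobj A Abar β Zs Hs = fobj A Abar β Zh Hs :=
    le_antisymm (hmin Zh Hs hZhfeas) hfle
  -- termwise equality
  have hterm : ∀ i j, Zs i j * c i j = Zh i j * c i j := by
    have hsum0 : ∑ i, ∑ j, (Zs i j * c i j - Zh i j * c i j) = 0 := by
      rw [Finset.sum_congr rfl fun i _ => Finset.sum_sub_distrib _ _, Finset.sum_sub_distrib]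
      rw [← hfZs, ← hfZh, hfeq]
      ring
    intro i j
    have hnn : ∀ a ∈ (Finset.univ : Finset (Fin n)),
        (0:ℝ) ≤ ∑ b, (Zs a b * c a b - Zh a b * c a b) :=
      fun a _ => Finset.sum_nonneg fun b _ => by linarith [htermle a b]
    have hrow := (Finset.sum_eq_zero_iff_of_nonneg hnn).mp hsum0 i (Finset.mem_univ i)
    have hnn2 : ∀ b ∈ (Finset.univ : Finset (Fin n)),
        (0:ℝ) ≤ Zs i b * c i b - Zh i b * c i b :=
      fun b _ => by linarith [htermle i b]
    have := (Finset.sum_eq_zero_iff_of_nonneg hnn2).mp hrow j (Finset.mem_univ j)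
    linarith
  -- W-facts for symmetric [0,1] matrices
  have hWsym : ∀ Z : Matrix (Fin n) (Fin n) ℝ, Zᵀ = Z →
      (Matrix.hadamard A Z)ᵀ = Matrix.hadamard A Z := by
    intro Z hZ
    ext i j
    simp only [Matrix.transpose_apply, Matrix.hadamard_apply]
    rw [hAs i j, show Z j i = Z i j from congrFun (congrFun hZ i) j]
  have hWpos : ∀ Z : Matrix (Fin n) (Fin n) ℝ, (∀ i j, 0 ≤ Z i j) →
      ∀ i j, 0 ≤ Matrix.hadamard A Z i j := by
    intro Z hZ i j
    exact mul_nonneg (hAnn i j) (hZ i j)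
  have hZhnn : ∀ i j, (0:ℝ) ≤ Zh i j := fun i j => (hZhfeas.2.2.1 i j).1
  -- fobj Zs ≤ 0  (compare with Z = 0)
  obtain ⟨H₀, hH₀⟩ := stiefel_nonempty (n := n) (d := d) hdn
  have hf0 : fobj A Abar β Zs Hs ≤ 0 := by
    have hfeas0 : feasCP A 0 H₀ := by
      refine ⟨Matrix.transpose_zero, fun i j h => absurd rfl h, fun i j => by norm_num, hH₀⟩
    have : fobj A Abar β 0 H₀ = 0 := by
      rw [fobj, Matrix.hadamard_zero, lap_zero, Matrix.mul_zero, Matrix.zero_mul,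
        Matrix.mul_zero, Matrix.trace_zero]
      simp
    linarith [hmin 0 H₀ hfeas0]
  -- bound on tr(Abar * Zh)
  have htrZh_le : Matrix.trace (Abar * Zh) ≤ S := by
    rw [trace_mul_eq Abar Zh hZhsym, hS]
    refine Finset.sum_le_sum fun i _ => Finset.sum_le_sum fun j _ => ?_
    rcases hZh01 i j with h | h <;> rw [h]
    · simpa using hAbnn i j
    · simp
  have htrZh_nn : 0 ≤ Matrix.trace (Abar * Zh) := by
    rw [trace_mul_eq Abar Zh hZhsym]
    refine Finset.sum_nonneg fun i _ => Finset.sum_nonneg fun j _ =>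
      mul_nonneg (hAbnn i j) (hZhnn i j)
  -- q := quadratic part at (Zh, Hs)
  set q : ℝ := Matrix.trace (Hsᵀ * Lap (Matrix.hadamard A Zh) * Hs) with hq
  have hqsplit : fobj A Abar β Zh Hs = q - β * Matrix.trace (Abar * Zh) := rfl
  have hq_lt : q < δ := by
    have : q ≤ β * Matrix.trace (Abar * Zh) := by
      have := hfeq ▸ hf0
      linarith [hqsplit ▸ this]
    calc q ≤ β * Matrix.trace (Abar * Zh) := this
      _ ≤ β * S := by nlinarith
      _ < δ := hβS
  -- Zh has kernel dimension ≥ d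
  have hZhk : d ≤ Module.finrank ℝ (LinearMap.ker (Lap (Matrix.hadamard A Zh)).mulVecLin) := by
    by_contra h
    push_neg at h
    have := hgap Zh hZhsym hZh01 h Hs hHs
    linarith
  -- q = 0
  have hq0 : q = 0 := by
    have hub : fobj A Abar β Zs Hs ≤ -β * Matrix.trace (Abar * Zm) := by
      obtain ⟨Hm, hHm, hHmcols⟩ := exists_stiefel_in
        (LinearMap.ker (Lap (Matrix.hadamard A Zm)).mulVecLin) hZmk
      have hfeasm : feasCP A Zm Hm := by
        refine ⟨hZmsym, hZmsupp, fun i j => ?_, hHm⟩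
        rcases hZmb i j with h | h <;> rw [h] <;> norm_num
      have : fobj A Abar β Zm Hm = -β * Matrix.trace (Abar * Zm) := by
        rw [fobj, trace_zero_of_cols_ker _ Hm hHmcols]
        ring
      linarith [hmin Zm Hm hfeasm]
    have hle : Matrix.trace (Abar * Zh) ≤ Matrix.trace (Abar * Zm) :=
      hZmmax Zh hZhsym hZhsupp hZh01 hZhk
    have h1 : q - β * Matrix.trace (Abar * Zh) ≤ -β * Matrix.trace (Abar * Zm) := by
      rw [← hqsplit, ← hfeq]
      exact hub
    have h2 : 0 ≤ q := lap_trace_nonneg _ (hWsym Zh hZhsym) (hWpos Zh hZhnn) Hs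
    nlinarith
  -- rows of Hs agree on Zh-edges
  have hrows := rows_eq_of_trace_zero _ (hWsym Zh hZhsym) (hWpos Zh hZhnn) Hs hq0
  -- no support entry has c = 0; in fact c ≤ 0 → c < 0
  have hclt : ∀ i j, A i j ≠ 0 → c i j ≤ 0 → c i j < 0 := by
    intro i j hA hc0
    have hZh1 : Zh i j = 1 := by simp only [hZhdef]; rw [if_pos ⟨hA, hc0⟩]
    have hW : Matrix.hadamard A Zh i j ≠ 0 := by
      simp only [Matrix.hadamard_apply, hZh1, mul_one]
      exact hA
    have hs0 : s i j = 0 := by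
      simp only [hsdef]
      refine Finset.sum_eq_zero fun k _ => ?_
      rw [hrows i j hW k]
      ring
    have hApos : 0 < A i j := lt_of_le_of_ne (hAnn i j) (Ne.symm hA)
    have hAbpos : 0 < Abar i j := lt_of_lt_of_le hApos (hAbge i j)
    have hcval : c i j = (1/2) * A i j * s i j - β * Abar i j := rfl
    rw [hcval, hs0]
    nlinarith
  -- Zs is binary and equals Zh
  have hZsbin : ∀ i j, Zs i j = Zh i j := by
    intro i j
    by_cases hA : A i j = 0
    · have hZs0 : Zs i j = 0 := by
        by_contra h
        exact hZsupp i j h hA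
      have hZh0 : Zh i j = 0 := by
        simp only [hZhdef]
        rw [if_neg (fun hc => hc.1 hA)]
      rw [hZs0, hZh0]
    · by_cases hcle : c i j ≤ 0
      · have hc := hclt i j hA hcle
        have hZh1 : Zh i j = 1 := by simp only [hZhdef]; rw [if_pos ⟨hA, hcle⟩]
        have hteq := hterm i j
        rw [hZh1, one_mul] at hteq
        have hfact : (Zs i j - 1) * c i j = 0 := by linear_combination hteq
        have hZs1 : Zs i j = 1 := by
          rcases mul_eq_zero.mp hfact with h | h
          · linarith
          · exact absurd h (ne_of_lt hc)
        rw [hZs1, hZh1]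
      · have hZh0 : Zh i j = 0 := by
          simp only [hZhdef]
          rw [if_neg (fun hc => hcle hc.2)]
        have := hterm i j
        rw [hZh0, zero_mul] at this
        have hZs0 : Zs i j = 0 := by
          have hcpos : (0:ℝ) < c i j := lt_of_not_ge hcle
          rcases mul_eq_zero.mp this with h | h
          · exact h
          · exact absurd h (ne_of_gt hcpos)
        rw [hZs0, hZh0]
  have hZsZh : Zs = Zh := by
    ext i j
    exact hZsbin i j
  -- kernel dimension of W := A ∘ Zs is exactly d
  set W : Matrix (Fin n) (Fin n) ℝ := Matrix.hadamard A Zs with hWdef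
  have hWsym' : Wᵀ = W := hWsym Zs hZsym
  have hWnn : ∀ i j, 0 ≤ W i j := hWpos Zs fun i j => (hZ01 i j).1
  have hWk_ge : d ≤ Module.finrank ℝ (LinearMap.ker (Lap W).mulVecLin) := by
    rw [hWdef, hZsZh]
    exact hZhk
  have hkerA : (Module.finrank ℝ (LinearMap.ker (Lap A).mulVecLin) : ℤ) ≤ d := by
    have := rank_eq_sub_nullity (Lap A)
    omega
  have hWk_eq : Module.finrank ℝ (LinearMap.ker (Lap W).mulVecLin) = d := by
    by_contra hne
    have hgt : d < Module.finrank ℝ (LinearMap.ker (Lap W).mulVecLin) :=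
      lt_of_le_of_ne hWk_ge (fun h => hne h.symm)
    -- there is an A-edge not respected by some kernel vector
    have hexists : ∃ i₀ j₀ : Fin n, A i₀ j₀ ≠ 0 ∧
        ∃ x ∈ LinearMap.ker (Lap W).mulVecLin, x i₀ ≠ x j₀ := by
      by_contra h
      push_neg at h
      have hsub : LinearMap.ker (Lap W).mulVecLin ≤ LinearMap.ker (Lap A).mulVecLin := by
        intro x hx
        rw [LinearMap.mem_ker, Matrix.mulVecLin_apply]
        exact mem_ker_of_const A x fun i j hij => h i j hij x hx
      have := Submodule.finrank_mono hsub
      omega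
    obtain ⟨i₀, j₀, hA₀, x, hxker, hxne⟩ := hexists
    have hxconst : ∀ i j, W i j ≠ 0 → x i = x j := by
      refine const_of_mem_ker W hWsym' hWnn x ?_
      rw [LinearMap.mem_ker, Matrix.mulVecLin_apply] at hxker
      exact hxker
    have hne₀ : i₀ ≠ j₀ := fun h => hxne (by rw [h])
    have hZs0 : Zs i₀ j₀ = 0 := by
      by_contra h
      have hW0 : W i₀ j₀ ≠ 0 := by
        simp only [hWdef, Matrix.hadamard_apply]
        exact mul_ne_zero hA₀ h
      exact hxne (hxconst i₀ j₀ hW0)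
    have hZs0' : Zs j₀ i₀ = 0 := by rw [hZs i₀ j₀]; exact hZs0
    -- augmented matrix
    set Z' : Matrix (Fin n) (Fin n) ℝ :=
      fun i j => if (i = i₀ ∧ j = j₀) ∨ (i = j₀ ∧ j = i₀) then 1 else Zs i j with hZ'def
    have hZ'sym : Z'ᵀ = Z' := by
      ext i j
      simp only [Matrix.transpose_apply]
      simp only [hZ'def]
      by_cases h : (i = i₀ ∧ j = j₀) ∨ (i = j₀ ∧ j = i₀)
      · rw [if_pos h, if_pos (by tauto)]
      · rw [if_neg (by tauto), if_neg h, hZs i j]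
    have hA₀' : A j₀ i₀ ≠ 0 := by rw [hAs i₀ j₀]; exact hA₀
    have hZ'supp : ∀ i j, Z' i j ≠ 0 → A i j ≠ 0 := by
      intro i j h
      simp only [hZ'def] at h
      by_cases hcase : (i = i₀ ∧ j = j₀) ∨ (i = j₀ ∧ j = i₀)
      · rcases hcase with ⟨h1, h2⟩ | ⟨h1, h2⟩
        · rw [h1, h2]; exact hA₀
        · rw [h1, h2]; exact hA₀'
      · rw [if_neg hcase] at h
        exact hZsupp i j h
    have hZ'01 : ∀ i j, 0 ≤ Z' i j ∧ Z' i j ≤ 1 := by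
      intro i j
      simp only [hZ'def]
      split
      · norm_num
      · exact hZ01 i j
    -- kernel of the augmented Laplacian has dimension ≥ d
    have hK' : d ≤ Module.finrank ℝ (LinearMap.ker (Lap (Matrix.hadamard A Z')).mulVecLin) := by
      set Kb : Submodule ℝ (Fin n → ℝ) := LinearMap.ker (Lap W).mulVecLin with hKb
      let φ : Kb →ₗ[ℝ] ℝ :=
        { toFun := fun y => (y : Fin n → ℝ) i₀ - (y : Fin n → ℝ) j₀
          map_add' := by intro a b; simp [Submodule.coe_add]; ring
          map_smul' := by intro r a; simp [Submodule.coe_smul]; ring }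
      have hkerφ : Module.finrank ℝ Kb ≤ Module.finrank ℝ (LinearMap.ker φ) + 1 := by
        have hrn := LinearMap.finrank_range_add_finrank_ker φ
        have hr1 : Module.finrank ℝ (LinearMap.range φ) ≤ 1 := by
          have := Submodule.finrank_le (LinearMap.range φ)
          simpa using this
        omega
      have hmap : d ≤ Module.finrank ℝ ((LinearMap.ker φ).map Kb.subtype) := by
        rw [Submodule.finrank_map_subtype_eq]
        omega
      have hsub : (LinearMap.ker φ).map Kb.subtype
          ≤ LinearMap.ker (Lap (Matrix.hadamard A Z')).mulVecLin := by
        rintro y ⟨u, hu, rfl⟩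
        rw [LinearMap.mem_ker, Matrix.mulVecLin_apply]
        have huker : (u : Fin n → ℝ) ∈ Kb := u.2
        have hu0 : (u : Fin n → ℝ) i₀ = (u : Fin n → ℝ) j₀ := by
          have hφ : (u : Fin n → ℝ) i₀ - (u : Fin n → ℝ) j₀ = 0 := hu
          linarith
        refine mem_ker_of_const _ _ fun a b hab => ?_
        simp only [Matrix.hadamard_apply] at hab
        have hZ'ab : Z' a b ≠ 0 := fun h => hab (by rw [h, mul_zero])
        simp only [hZ'def] at hZ'ab
        by_cases hcase : (a = i₀ ∧ b = j₀) ∨ (a = j₀ ∧ b = i₀)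
        · rcases hcase with ⟨h1, h2⟩ | ⟨h1, h2⟩
          · rw [h1, h2]; exact hu0
          · rw [h1, h2]; exact hu0.symm
        · rw [if_neg hcase] at hZ'ab
          have hAab : A a b ≠ 0 := fun h => hab (by rw [h, zero_mul])
          have hWab : W a b ≠ 0 := by
            have : W a b = A a b * Zs a b := rfl
            rw [this]
            exact mul_ne_zero hAab hZ'ab
          have h2 : (Lap W).mulVecLin (u : Fin n → ℝ) = 0 := LinearMap.mem_ker.mp huker
          have h3 : Lap W *ᵥ (u : Fin n → ℝ) = 0 := by
            rw [← Matrix.mulVecLin_apply]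
            exact h2
          exact const_of_mem_ker W hWsym' hWnn (u : Fin n → ℝ) h3 a b hWab
      calc d ≤ Module.finrank ℝ ((LinearMap.ker φ).map Kb.subtype) := hmap
        _ ≤ _ := Submodule.finrank_mono hsub
    -- construct a feasible point with strictly smaller objective: contradiction
    obtain ⟨H', hH', hH'cols⟩ := exists_stiefel_in
      (LinearMap.ker (Lap (Matrix.hadamard A Z')).mulVecLin) hK'
    have hfeas' : feasCP A Z' H' := ⟨hZ'sym, hZ'supp, hZ'01, hH'⟩
    have hfZ' : fobj A Abar β Z' H' = -β * Matrix.trace (Abar * Z') := by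
      rw [fobj, trace_zero_of_cols_ker _ H' hH'cols]
      ring
    have htr_lt : Matrix.trace (Abar * Zs) < Matrix.trace (Abar * Z') := by
      rw [trace_mul_eq Abar Zs hZsym, trace_mul_eq Abar Z' hZ'sym]
      have hAb₀ : 0 < Abar i₀ j₀ :=
        lt_of_lt_of_le (lt_of_le_of_ne (hAnn i₀ j₀) (Ne.symm hA₀)) (hAbge i₀ j₀)
      have hinner : ∀ i, (∑ j, Abar i j * Zs i j) ≤ ∑ j, Abar i j * Z' i j := by
        intro i
        refine Finset.sum_le_sum fun j _ => ?_
        have hle : Zs i j ≤ Z' i j := by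
          simp only [hZ'def]
          split
          · exact (hZ01 i j).2
          · exact le_refl _
        exact mul_le_mul_of_nonneg_left hle (hAbnn i j)
      refine Finset.sum_lt_sum (fun i _ => hinner i) ⟨i₀, Finset.mem_univ i₀, ?_⟩
      refine Finset.sum_lt_sum (fun j _ => ?_) ⟨j₀, Finset.mem_univ j₀, ?_⟩
      · have hle : Zs i₀ j ≤ Z' i₀ j := by
          simp only [hZ'def]
          split
          · exact (hZ01 i₀ j).2
          · exact le_refl _
        exact mul_le_mul_of_nonneg_left hle (hAbnn i₀ j)
      · have hZ'1 : Z' i₀ j₀ = 1 := by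
          simp [hZ'def]
        rw [hZ'1, hZs0, mul_zero, mul_one]
        exact hAb₀
    have hfZs0 : fobj A Abar β Zs Hs = -β * Matrix.trace (Abar * Zs) := by
      have : Matrix.trace (Hsᵀ * Lap (Matrix.hadamard A Zs) * Hs) = 0 := by
        rw [hZsZh]
        exact hq0
      rw [fobj, this]
      ring
    have : fobj A Abar β Z' H' < fobj A Abar β Zs Hs := by
      rw [hfZ', hfZs0]
      nlinarith
    linarith [hmin Z' H' hfeas']
  constructor
  · have := rank_eq_sub_nullity (Lap W)
    rw [hWk_eq] at this
    rw [hWdef] at this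
    exact this
  · intro i j
    rw [hZsbin i j]
    exact hZh01 i j
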